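/- arXiv:2105.08832 — 3 statements merged into one kernel-verified Lean document; each statement's English description precedes it below -/
import Mathlib

section
/- Let g : E → E be continuous and suppose there is γ > 0 such that ⟪x − y, g x − g y⟫_P ≤ −γ · ‖x − y‖_P² for all x, y ∈ E. Then there exists a unique x* ∈ E with g x* = 0. -/
/-- Weighted inner product `⟪u, P.mulVec v⟫` on Euclidean space. -/
noncomputable def wip {n : ℕ} (P : Matrix (Fin n) (Fin n) ℝ)
    (u v : EuclideanSpace ℝ (Fin n)) : ℝ :=
  ∑ i, u i * P.mulVec (fun j => v j) i

/-- Weighted norm `‖u‖_P = √⟪u, u⟫_P`. -/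
noncomputable def wnorm {n : ℕ} (P : Matrix (Fin n) (Fin n) ℝ)
    (u : EuclideanSpace ℝ (Fin n)) : ℝ :=
  Real.sqrt (wip P u u)

/-!
The map `x ↦ -P g x` is strongly monotone for the standard inner product, because the
`P`-norm dominates a multiple of the Euclidean norm. A strongly monotone map is antilipschitz,
hence injective and proper. If it is `C¹`, its derivative is injective everywhere, so by the
inverse function theorem its range is open; being also closed, the range is the whole space.
A continuous strongly monotone map is the limit of its mollifications, which stay strongly
monotone; their zeros are bounded, and a limit point of them is a zero of the original map.
-/

open Filter Function Metric Set MeasureTheory ContinuousLinearMap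
open scoped RealInnerProductSpace Topology Convolution

theorem exists_pos_mul_sq_norm_le_of_homogeneous {F : Type*} [NormedAddCommGroup F]
    [NormedSpace ℝ F] [FiniteDimensional ℝ F] {q : F → ℝ} (hq : Continuous q)
    (hsmul : ∀ (r : ℝ) u, q (r • u) = r ^ 2 * q u) (hpos : ∀ u ≠ 0, 0 < q u) :
    ∃ m > 0, ∀ u, m * ‖u‖ ^ 2 ≤ q u := by
  have hq0 : q 0 = 0 := by simpa using hsmul 0 0
  rcases subsingleton_or_nontrivial F with _ | _
  · exact ⟨1, one_pos, fun u => by simp [Subsingleton.elim u 0, hq0]⟩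
  obtain ⟨a, ha, hmin⟩ := (isCompact_sphere (0 : F) 1).exists_isMinOn
    (NormedSpace.sphere_nonempty.mpr zero_le_one) hq.continuousOn
  have ha1 : ‖a‖ = 1 := by simpa using ha
  refine ⟨q a, hpos a (norm_ne_zero_iff.mp (by simp [ha1])), fun u => ?_⟩
  rcases eq_or_ne u 0 with rfl | hu
  · simp [hq0]
  have hnu : ‖u‖ ≠ 0 := norm_ne_zero_iff.mpr hu
  have hw : ‖u‖⁻¹ • u ∈ sphere (0 : F) 1 := by simp [norm_smul, hnu]
  calc q a * ‖u‖ ^ 2 ≤ q (‖u‖⁻¹ • u) * ‖u‖ ^ 2 := by gcongr; exact hmin hw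
    _ = q u := by rw [hsmul, inv_pow, mul_comm, ← mul_assoc, mul_inv_cancel₀ (by positivity),
      one_mul]

section

variable {F : Type*} [NormedAddCommGroup F] [InnerProductSpace ℝ F]

def StronglyMonotone (c : ℝ) (f : F → F) : Prop :=
  ∀ x y, c * ‖x - y‖ ^ 2 ≤ ⟪x - y, f x - f y⟫

namespace StronglyMonotone

variable {c : ℝ} {f : F → F}

theorem mul_norm_sub_le (hf : StronglyMonotone c f) (x y : F) :
    c * ‖x - y‖ ≤ ‖f x - f y‖ := by
  rcases eq_or_ne x y with rfl | hxy
  · simp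
  have hpos : 0 < ‖x - y‖ := norm_pos_iff.mpr (sub_ne_zero.mpr hxy)
  refine le_of_mul_le_mul_right ?_ hpos
  calc c * ‖x - y‖ * ‖x - y‖ = c * ‖x - y‖ ^ 2 := by ring
    _ ≤ ⟪x - y, f x - f y⟫ := hf x y
    _ ≤ ‖x - y‖ * ‖f x - f y‖ := real_inner_le_norm _ _
    _ = ‖f x - f y‖ * ‖x - y‖ := mul_comm _ _

theorem antilipschitzWith (hf : StronglyMonotone c f) (hc : 0 < c) :
    AntilipschitzWith (Real.toNNReal c)⁻¹ f :=
  AntilipschitzWith.of_le_mul_dist fun x y => by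
    rw [NNReal.coe_inv, Real.coe_toNNReal _ hc.le, dist_eq_norm, dist_eq_norm,
      le_inv_mul_iff₀ hc]
    exact hf.mul_norm_sub_le x y

theorem injective (hf : StronglyMonotone c f) (hc : 0 < c) : Injective f :=
  (hf.antilipschitzWith hc).injective

theorem sub_const (hf : StronglyMonotone c f) (y : F) : StronglyMonotone c fun x => f x - y := by
  intro x z
  simpa only [sub_sub_sub_cancel_right] using hf x z

theorem monotone_inner_comp_line (hf : StronglyMonotone c f) (x v : F) :
    Monotone fun t : ℝ => ⟪v, f (x + t • v)⟫ - c * ‖v‖ ^ 2 * t := by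
  intro s t hst
  rcases hst.eq_or_lt with rfl | hst
  · rfl
  have key := hf (x + t • v) (x + s • v)
  rw [add_sub_add_left_eq_sub, ← sub_smul, norm_smul, real_inner_smul_left, inner_sub_right,
    Real.norm_eq_abs, abs_of_pos (sub_pos.mpr hst)] at key
  have : c * ‖v‖ ^ 2 * (t - s) ≤ ⟪v, f (x + t • v)⟫ - ⟪v, f (x + s • v)⟫ :=
    le_of_mul_le_mul_left (by linarith) (sub_pos.mpr hst)
  linarith

theorem of_hasFDerivAt (hf : StronglyMonotone c f) {L : F →L[ℝ] F} {x : F}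
    (hL : HasFDerivAt f L x) : StronglyMonotone c L := by
  suffices h : ∀ v, c * ‖v‖ ^ 2 ≤ ⟪v, L v⟫ by
    intro v w
    simpa only [map_sub] using h (v - w)
  intro v
  have hline : HasDerivAt (fun t : ℝ => x + t • v) v 0 := by
    simpa using ((hasDerivAt_id (0 : ℝ)).smul_const v).const_add x
  have hL' : HasFDerivAt f L (x + (0 : ℝ) • v) := by simpa using hL
  have hderiv : HasDerivAt (fun t : ℝ => ⟪v, f (x + t • v)⟫ - c * ‖v‖ ^ 2 * t)
      (⟪v, L v⟫ - c * ‖v‖ ^ 2 * 1) 0 :=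
    ((innerSL ℝ v).hasFDerivAt.comp_hasDerivAt 0 (hL'.comp_hasDerivAt 0 hline)).sub
      ((hasDerivAt_id 0).const_mul _)
  linarith [hderiv.nonneg_of_monotone (hf.monotone_inner_comp_line x v)]

variable [FiniteDimensional ℝ F]

theorem surjective_of_contDiff (hf : StronglyMonotone c f) (hc : 0 < c) (hf1 : ContDiff ℝ 1 f) :
    Surjective f := by
  have hderiv x : HasStrictFDerivAt f (fderiv ℝ f x) x :=
    hf1.contDiffAt.hasStrictFDerivAt one_ne_zero
  have hinj x : Injective (fderiv ℝ f x) :=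
    (hf.of_hasFDerivAt (hderiv x).hasFDerivAt).injective hc
  have hopen : IsOpenMap f := isOpenMap_of_hasStrictFDerivAt_equiv
    (f' := fun x => (LinearEquiv.ofInjectiveEndo _ (hinj x)).toContinuousLinearEquiv) hderiv
  have hproper : IsProperMap f := isProperMap_iff_tendsto_cocompact.mpr
    ⟨hf1.continuous, by
      simpa only [cobounded_eq_cocompact] using (hf.antilipschitzWith hc).tendsto_cobounded⟩
  have hclopen : IsClopen (range f) := ⟨hproper.isClosedMap.isClosed_range, hopen.isOpen_range⟩
  exact range_eq_univ.mp (hclopen.eq_univ (range_nonempty f))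

theorem convolution [MeasurableSpace F] [BorelSpace F] {μ : Measure F} [μ.IsAddHaarMeasure]
    (hf : StronglyMonotone c f) (hcont : Continuous f) (φ : ContDiffBump (0 : F)) :
    StronglyMonotone c (φ.normed μ ⋆[lsmul ℝ ℝ, μ] f) := by
  intro x y
  set ρ := φ.normed μ
  have hint z : Integrable (fun t => ρ t • f (z - t)) μ :=
    (φ.continuous_normed.smul (by fun_prop)).integrable_of_hasCompactSupport
      φ.hasCompactSupport_normed.smul_right
  have hdiff : (ρ ⋆[lsmul ℝ ℝ, μ] f) x - (ρ ⋆[lsmul ℝ ℝ, μ] f) y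
      = ∫ t, ρ t • (f (x - t) - f (y - t)) ∂μ := by
    simp only [convolution_def, lsmul_apply, smul_sub]
    exact (integral_sub (hint x) (hint y)).symm
  have hint' : Integrable (fun t => ρ t • (f (x - t) - f (y - t))) μ :=
    ((hint x).sub (hint y)).congr (.of_forall fun t => by simp [smul_sub])
  have hpt t : ρ t * (c * ‖x - y‖ ^ 2) ≤ ⟪x - y, ρ t • (f (x - t) - f (y - t))⟫ := by
    rw [real_inner_smul_right]
    gcongr
    · exact φ.nonneg_normed t
    · simpa only [sub_sub_sub_cancel_right] using hf (x - t) (y - t)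
  calc c * ‖x - y‖ ^ 2 = ∫ t, ρ t * (c * ‖x - y‖ ^ 2) ∂μ := by
        rw [integral_mul_const, φ.integral_normed, one_mul]
    _ ≤ ∫ t, ⟪x - y, ρ t • (f (x - t) - f (y - t))⟫ ∂μ :=
        integral_mono (φ.integrable_normed.mul_const _) (hint'.const_inner _) hpt
    _ = ⟪x - y, (ρ ⋆[lsmul ℝ ℝ, μ] f) x - (ρ ⋆[lsmul ℝ ℝ, μ] f) y⟫ := by
        rw [hdiff, integral_inner hint']

theorem exists_eq_zero (hf : StronglyMonotone c f) (hc : 0 < c) (hcont : Continuous f) :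
    ∃ x, f x = 0 := by
  let : MeasurableSpace F := borel F
  have : BorelSpace F := ⟨rfl⟩
  let φ : ℕ → ContDiffBump (0 : F) := fun k =>
    ⟨((k : ℝ) + 1)⁻¹, 2 * ((k : ℝ) + 1)⁻¹, by positivity,
      by linarith [show 0 < ((k : ℝ) + 1)⁻¹ by positivity]⟩
  have hφ : Tendsto (fun k => (φ k).rOut) atTop (𝓝 0) := by
    simpa using (tendsto_inv_atTop_zero.comp
      (tendsto_atTop_add_const_right atTop (1 : ℝ) tendsto_natCast_atTop_atTop)).const_mul 2
  set fk : ℕ → F → F := fun k => (φ k).normed volume ⋆[lsmul ℝ ℝ, volume] f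
  have hmono k : StronglyMonotone c (fk k) := hf.convolution hcont (φ k)
  have hsmooth k : ContDiff ℝ 1 (fk k) :=
    (φ k).hasCompactSupport_normed.contDiff_convolution_left _ (φ k).contDiff_normed
      hcont.locallyIntegrable
  choose x hx using fun k => (hmono k).surjective_of_contDiff hc (hsmooth k) 0
  have hf0 : Tendsto (fun k => fk k 0) atTop (𝓝 (f 0)) :=
    ContDiffBump.convolution_tendsto_right_of_continuous hφ hcont 0
  obtain ⟨C, hC⟩ := hf0.norm.bddAbove_range
  have hbdd k : x k ∈ closedBall 0 (c⁻¹ * C) := by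
    have := (hmono k).mul_norm_sub_le (x k) 0
    rw [hx k, zero_sub, norm_neg, sub_zero] at this
    rw [mem_closedBall_zero_iff, le_inv_mul_iff₀ hc]
    exact this.trans (hC ⟨k, rfl⟩)
  obtain ⟨a, -, ψ, hψ, hlim⟩ := (isCompact_closedBall _ _).tendsto_subseq hbdd
  have hconv : Tendsto (fun j => fk (ψ j) (x (ψ j))) atTop (𝓝 (f a)) :=
    ContDiffBump.convolution_tendsto_right (hφ.comp hψ.tendsto_atTop)
      (Eventually.of_forall fun _ => hcont.aestronglyMeasurable)
      ((hcont.tendsto a).comp tendsto_snd) hlim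
  refine ⟨a, tendsto_nhds_unique hconv ?_⟩
  simpa only [hx] using tendsto_const_nhds

theorem surjective (hf : StronglyMonotone c f) (hc : 0 < c) (hcont : Continuous f) :
    Surjective f := fun y =>
  ((hf.sub_const y).exists_eq_zero hc (hcont.sub continuous_const)).imp fun _ => sub_eq_zero.mp

theorem bijective (hf : StronglyMonotone c f) (hc : 0 < c) (hcont : Continuous f) :
    Bijective f :=
  ⟨hf.injective hc, hf.surjective hc hcont⟩

end StronglyMonotone

end

section Weighted

variable {n : ℕ} {P : Matrix (Fin n) (Fin n) ℝ}

theorem wip_eq_inner (u v : EuclideanSpace ℝ (Fin n)) :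
    wip P u v = ⟪u, Matrix.toEuclideanCLM (𝕜 := ℝ) P v⟫ := by
  simp [wip, PiLp.inner_apply, mul_comm]

theorem wip_self_eq_dotProduct (u : EuclideanSpace ℝ (Fin n)) :
    wip P u u = star u.ofLp ⬝ᵥ P.mulVec u.ofLp := by
  simp [wip, dotProduct]

theorem wip_self_pos (hP : P.PosDef) {u : EuclideanSpace ℝ (Fin n)} (hu : u ≠ 0) :
    0 < wip P u u := by
  rw [wip_self_eq_dotProduct]
  exact hP.dotProduct_mulVec_pos (x := u.ofLp) (by simpa using hu)

theorem wnorm_sq (hP : P.PosDef) (u : EuclideanSpace ℝ (Fin n)) : wnorm P u ^ 2 = wip P u u := by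
  rw [wnorm, Real.sq_sqrt, wip_self_eq_dotProduct]
  exact hP.posSemidef.dotProduct_mulVec_nonneg _

theorem exists_pos_mul_sq_norm_le_wip (hP : P.PosDef) :
    ∃ m > 0, ∀ u : EuclideanSpace ℝ (Fin n), m * ‖u‖ ^ 2 ≤ wip P u u := by
  refine exists_pos_mul_sq_norm_le_of_homogeneous ?_ (fun r u => ?_) fun u => wip_self_pos hP
  · simp only [wip_eq_inner]
    fun_prop
  · simp only [wip_eq_inner, map_smul, real_inner_smul_left, real_inner_smul_right]
    ring

theorem Matrix.PosDef.toEuclideanCLM_injective (hP : P.PosDef) :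
    Injective (Matrix.toEuclideanCLM (𝕜 := ℝ) P) := by
  refine (injective_iff_map_eq_zero _).mpr fun u hu => ?_
  by_contra hne
  simpa [wip_eq_inner, hu] using wip_self_pos hP hne

end Weighted

theorem stmt_2_general {n : ℕ} (P : Matrix (Fin n) (Fin n) ℝ)
    (hPpos : P.PosDef)
    (g : EuclideanSpace ℝ (Fin n) → EuclideanSpace ℝ (Fin n))
    (hg : Continuous g) (γ : ℝ) (hγ : 0 < γ)
    (hOSL : ∀ x y : EuclideanSpace ℝ (Fin n),
      wip P (x - y) (g x - g y) ≤ -γ * (wnorm P (x - y)) ^ 2) :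
    ∃! xs : EuclideanSpace ℝ (Fin n), g xs = 0 := by
  set A := Matrix.toEuclideanCLM (𝕜 := ℝ) P
  obtain ⟨m, hm, hmP⟩ := exists_pos_mul_sq_norm_le_wip hPpos
  have hmono : StronglyMonotone (γ * m) fun x => -A (g x) := by
    intro x y
    have hxy := hOSL x y
    rw [wnorm_sq hPpos] at hxy
    calc γ * m * ‖x - y‖ ^ 2 ≤ γ * wip P (x - y) (x - y) := by
          rw [mul_assoc]; exact mul_le_mul_of_nonneg_left (hmP _) hγ.le
      _ ≤ -wip P (x - y) (g x - g y) := by linarith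
      _ = ⟪x - y, -A (g x) - -A (g y)⟫ := by
          rw [wip_eq_inner, ← inner_neg_right, ← map_neg, neg_sub, neg_sub_neg, map_sub]
  have hzero x : -A (g x) = 0 ↔ g x = 0 := by
    rw [neg_eq_zero, map_eq_zero_iff _ hPpos.toEuclideanCLM_injective]
  simpa only [hzero] using (hmono.bijective (mul_pos hγ hm) (by fun_prop)).existsUnique 0

theorem stmt_2 {n : ℕ} (P : Matrix (Fin n) (Fin n) ℝ)
    (hPsymm : P.IsSymm) (hPpos : P.PosDef)
    (g : EuclideanSpace ℝ (Fin n) → EuclideanSpace ℝ (Fin n))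
    (hg : Continuous g) (γ : ℝ) (hγ : 0 < γ)
    (hOSL : ∀ x y : EuclideanSpace ℝ (Fin n),
      wip P (x - y) (g x - g y) ≤ -γ * (wnorm P (x - y)) ^ 2) :
    ∃! xs : EuclideanSpace ℝ (Fin n), g xs = 0 :=
  stmt_2_general P hPpos g hg γ hγ hOSL
end

section
/- Suppose g : E → ℝ → E satisfies the one-sided Lipschitz condition with constant rate γ > 0 (with respect to ‖·‖_P) on [0, ∞). Let h > 0, let x* : ℝ → E satisfy g (x* t) t = 0 for all t ≥ 0, and suppose ‖x* (k·h) − x* ((k−1)·h)‖_P ≤ ρ for all k ≥ 1, where ρ ≥ 0. Let y : ℕ → E satisfy the implicit Euler recursion y (k+1) = y k + h • g (y (k+1)) ((k+1)·h) for all k. Then for every k ≥ 1, ‖y k − x* (k·h)‖_P ≤ (1 + h·γ)^(−k) · ‖y 0 − x* 0‖_P + ρ · ∑_{m=1}^{k} (1 + h·γ)^(−m), and moreover limsup_{k→∞} ‖y k − x* (k·h)‖_P ≤ ρ/(h·γ). -/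
/-
The weighted inner product of a positive semidefinite `P = Bᵀ B` is the Euclidean inner product
after applying `B`, so Cauchy–Schwarz and the triangle inequality hold for `‖·‖_P`.
Let `d = y (k+1) - x* ((k+1) h)`. Since `g (x* ((k+1) h)) = 0`, the implicit Euler step reads
`d = (y k - x* ((k+1) h)) + h • (g (y (k+1)) - g (x* ((k+1) h)))`; pairing with `d` and using
the one-sided Lipschitz bound gives `(1 + hγ) ‖d‖_P ≤ ‖y k - x* ((k+1) h)‖_P ≤ ‖y k - x* (k h)‖_P + ρ`.
Unrolling this contraction with ratio `r = (1 + hγ)⁻¹` gives the bound, and its limit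
`ρ r / (1 - r) = ρ / (hγ)` bounds the limsup.
-/

open Finset Filter

open scoped Matrix MatrixOrder InnerProductSpace Topology

theorem Matrix.PosSemidef.exists_eq_transpose_mul_self {n : ℕ} {P : Matrix (Fin n) (Fin n) ℝ}
    (hP : P.PosSemidef) : ∃ B : Matrix (Fin n) (Fin n) ℝ, P = Bᵀ * B := by
  obtain ⟨B, rfl⟩ := CStarAlgebra.nonneg_iff_eq_star_mul_self.mp hP.nonneg
  exact ⟨B, rfl⟩

theorem wip_transpose_mul_self {n : ℕ} (B : Matrix (Fin n) (Fin n) ℝ)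
    (u v : EuclideanSpace ℝ (Fin n)) :
    wip (Bᵀ * B) u v = ⟪Matrix.toEuclideanLin B u, Matrix.toEuclideanLin B v⟫_ℝ := by
  rw [EuclideanSpace.inner_eq_star_dotProduct, star_trivial, dotProduct_comm]
  change WithLp.ofLp u ⬝ᵥ (Bᵀ * B) *ᵥ WithLp.ofLp v = _
  rw [← Matrix.mulVec_mulVec, Matrix.dotProduct_mulVec, Matrix.vecMul_transpose]
  rfl

theorem wnorm_transpose_mul_self {n : ℕ} (B : Matrix (Fin n) (Fin n) ℝ)
    (u : EuclideanSpace ℝ (Fin n)) : wnorm (Bᵀ * B) u = ‖Matrix.toEuclideanLin B u‖ := by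
  rw [wnorm, wip_transpose_mul_self, real_inner_self_eq_norm_sq, Real.sqrt_sq (norm_nonneg _)]

section ImplicitEuler

variable {E F : Type*} [AddCommGroup E] [Module ℝ E] [NormedAddCommGroup F]
  [InnerProductSpace ℝ F]

theorem one_add_mul_mul_norm_sub_le_of_implicit_step (T : E →ₗ[ℝ] F) {f : E → E} {γ h : ℝ}
    (hh : 0 ≤ h) (hf : ∀ x y, ⟪T (x - y), T (f x - f y)⟫_ℝ ≤ -γ * ‖T (x - y)‖ ^ 2)
    {x y₀ y₁ : E} (hx : f x = 0) (hy : y₁ = y₀ + h • f y₁) :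
    (1 + h * γ) * ‖T (y₁ - x)‖ ≤ ‖T (y₀ - x)‖ := by
  have hd : T (y₁ - x) = T (y₀ - x) + h • T (f y₁ - f x) := by
    rw [← map_smul, ← map_add, hx, sub_zero]
    conv_lhs => rw [hy]
    congr 1
    abel
  set d := T (y₁ - x)
  have key : (1 + h * γ) * ‖d‖ ^ 2 ≤ ‖d‖ * ‖T (y₀ - x)‖ := by
    have hcs := real_inner_le_norm d (T (y₀ - x))
    have hosl := mul_le_mul_of_nonneg_left (hf y₁ x) hh
    have hdd : ‖d‖ ^ 2 = ⟪d, T (y₀ - x)⟫_ℝ + h * ⟪d, T (f y₁ - f x)⟫_ℝ := by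
      rw [← real_inner_self_eq_norm_sq, ← real_inner_smul_right, ← inner_add_right, ← hd]
    linarith
  rcases (norm_nonneg d).eq_or_lt with hd0 | hd0
  · rw [← hd0, mul_zero]
    exact norm_nonneg _
  · nlinarith

end ImplicitEuler

theorem sum_Icc_one_pow {R : Type*} [CommSemiring R] (r : R) (k : ℕ) :
    ∑ m ∈ Icc 1 k, r ^ m = r * ∑ i ∈ range k, r ^ i := by
  induction k with
  | zero => simp
  | succ k ih => rw [sum_Icc_succ_top (by omega), ih, sum_range_succ, mul_add, pow_succ']

section Contraction

variable {a : ℕ → ℝ} {r ρ : ℝ}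

theorem le_pow_mul_add_mul_geom_sum (hr : 0 ≤ r) (ha : ∀ k, a (k + 1) ≤ r * (a k + ρ))
    (k : ℕ) : a k ≤ r ^ k * a 0 + ρ * (r * ∑ i ∈ range k, r ^ i) := by
  induction k with
  | zero => simp
  | succ k ih =>
    calc a (k + 1) ≤ r * (a k + ρ) := ha k
      _ ≤ r * (r ^ k * a 0 + ρ * (r * ∑ i ∈ range k, r ^ i) + ρ) := by gcongr
      _ = r ^ (k + 1) * a 0 + ρ * (r * (r * ∑ i ∈ range k, r ^ i + 1)) := by ring
      _ = r ^ (k + 1) * a 0 + ρ * (r * ∑ i ∈ range (k + 1), r ^ i) := by rw [geom_sum_succ]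

theorem limsup_le_of_le_mul_add (hr₀ : 0 ≤ r) (hr₁ : r < 1) (ha₀ : ∀ k, 0 ≤ a k)
    (ha : ∀ k, a (k + 1) ≤ r * (a k + ρ)) : limsup a atTop ≤ ρ * (r * (1 - r)⁻¹) := by
  have hlim : Tendsto (fun k => r ^ k * a 0 + ρ * (r * ∑ i ∈ range k, r ^ i)) atTop
      (𝓝 (0 * a 0 + ρ * (r * (1 - r)⁻¹))) :=
    ((tendsto_pow_atTop_nhds_zero_of_lt_one hr₀ hr₁).mul_const _).add
      (((hasSum_geometric_of_lt_one hr₀ hr₁).tendsto_sum_nat.const_mul r).const_mul ρ)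
  rw [zero_mul, zero_add] at hlim
  calc limsup a atTop
      ≤ limsup (fun k => r ^ k * a 0 + ρ * (r * ∑ i ∈ range k, r ^ i)) atTop :=
        limsup_le_limsup (.of_forall (le_pow_mul_add_mul_geom_sum hr₀ ha))
          (isCoboundedUnder_le_of_eventually_le _ (.of_forall ha₀)) hlim.isBoundedUnder_le
    _ = ρ * (r * (1 - r)⁻¹) := hlim.limsup_eq

end Contraction

theorem stmt_5_general {n : ℕ} (P : Matrix (Fin n) (Fin n) ℝ)
    (hPpos : P.PosDef)
    (g : EuclideanSpace ℝ (Fin n) → ℝ → EuclideanSpace ℝ (Fin n))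
    (γ : ℝ) (hγ : 0 < γ)
    (hOSL : ∀ x y : EuclideanSpace ℝ (Fin n), ∀ t : ℝ, 0 ≤ t →
      wip P (x - y) (g x t - g y t) ≤ -γ * (wnorm P (x - y)) ^ 2)
    (h : ℝ) (hh : 0 < h)
    (xs : ℝ → EuclideanSpace ℝ (Fin n)) (hxs : ∀ t : ℝ, 0 ≤ t → g (xs t) t = 0)
    (ρ : ℝ)
    (hxsmove : ∀ k : ℕ, 1 ≤ k →
      wnorm P (xs ((k : ℝ) * h) - xs (((k : ℝ) - 1) * h)) ≤ ρ)
    (y : ℕ → EuclideanSpace ℝ (Fin n))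
    (hy : ∀ k : ℕ, y (k + 1) = y k + h • g (y (k + 1)) (((k : ℝ) + 1) * h)) :
    (∀ k : ℕ, 1 ≤ k →
      wnorm P (y k - xs ((k : ℝ) * h)) ≤
        (1 + h * γ) ^ (-(k : ℤ)) * wnorm P (y 0 - xs 0) +
          ρ * ∑ m ∈ Finset.Icc 1 k, (1 + h * γ) ^ (-(m : ℤ))) ∧
    limsup (fun k : ℕ => wnorm P (y k - xs ((k : ℝ) * h))) atTop ≤ ρ / (h * γ) := by
  obtain ⟨B, rfl⟩ := hPpos.posSemidef.exists_eq_transpose_mul_self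
  set T := Matrix.toEuclideanLin B
  simp only [wip_transpose_mul_self, wnorm_transpose_mul_self] at hOSL hxsmove ⊢
  set a : ℕ → ℝ := fun k => ‖T (y k - xs (k * h))‖ with ha
  have hq : 0 < 1 + h * γ := by positivity
  have hstep (k : ℕ) : a (k + 1) ≤ (1 + h * γ)⁻¹ * (a k + ρ) := by
    simp only [ha]
    have ht : 0 ≤ ((k : ℝ) + 1) * h := by positivity
    have hmove := hxsmove (k + 1) k.succ_pos
    push_cast at hmove ⊢
    rw [add_sub_cancel_right] at hmove
    rw [le_inv_mul_iff₀ hq]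
    calc (1 + h * γ) * ‖T (y (k + 1) - xs ((k + 1) * h))‖
        ≤ ‖T (y k - xs ((k + 1) * h))‖ :=
          one_add_mul_mul_norm_sub_le_of_implicit_step T hh.le (fun x y => hOSL x y _ ht)
            (hxs _ ht) (hy k)
      _ ≤ ‖T (y k - xs (k * h))‖ + ρ := by
          rw [← sub_sub_sub_cancel_right (y k) (xs ((k + 1) * h)) (xs (k * h)), map_sub]
          exact (norm_sub_le _ _).trans (by gcongr)
  refine ⟨fun k _ => ?_, ?_⟩
  · simpa only [zpow_neg, zpow_natCast, ← inv_pow, sum_Icc_one_pow, ha,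
      Nat.cast_zero, zero_mul]
      using le_pow_mul_add_mul_geom_sum (by positivity) hstep k
  · calc limsup a atTop
        ≤ ρ * ((1 + h * γ)⁻¹ * (1 - (1 + h * γ)⁻¹)⁻¹) :=
          limsup_le_of_le_mul_add (by positivity) (inv_lt_one_of_one_lt₀ (by nlinarith))
            (fun _ => norm_nonneg _) hstep
      _ = ρ / (h * γ) := by field_simp; ring

theorem stmt_5 {n : ℕ} (P : Matrix (Fin n) (Fin n) ℝ)
    (hPsymm : P.IsSymm) (hPpos : P.PosDef)
    (g : EuclideanSpace ℝ (Fin n) → ℝ → EuclideanSpace ℝ (Fin n))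
    (γ : ℝ) (hγ : 0 < γ)
    (hOSL : ∀ x y : EuclideanSpace ℝ (Fin n), ∀ t : ℝ, 0 ≤ t →
      wip P (x - y) (g x t - g y t) ≤ -γ * (wnorm P (x - y)) ^ 2)
    (h : ℝ) (hh : 0 < h)
    (xs : ℝ → EuclideanSpace ℝ (Fin n)) (hxs : ∀ t : ℝ, 0 ≤ t → g (xs t) t = 0)
    (ρ : ℝ) (hρ : 0 ≤ ρ)
    (hxsmove : ∀ k : ℕ, 1 ≤ k →
      wnorm P (xs ((k : ℝ) * h) - xs (((k : ℝ) - 1) * h)) ≤ ρ)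
    (y : ℕ → EuclideanSpace ℝ (Fin n))
    (hy : ∀ k : ℕ, y (k + 1) = y k + h • g (y (k + 1)) (((k : ℝ) + 1) * h)) :
    (∀ k : ℕ, 1 ≤ k →
      wnorm P (y k - xs ((k : ℝ) * h)) ≤
        (1 + h * γ) ^ (-(k : ℤ)) * wnorm P (y 0 - xs 0) +
          ρ * ∑ m ∈ Finset.Icc 1 k, (1 + h * γ) ^ (-(m : ℤ))) ∧
    limsup (fun k : ℕ => wnorm P (y k - xs ((k : ℝ) * h))) atTop ≤ ρ / (h * γ) :=
  stmt_5_general P hPpos g γ hγ hOSL h hh xs hxs ρ hxsmove y hy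
end

section
/- Suppose g : E → ℝ → E is uniformly ℓ-Lipschitz with respect to ‖·‖_P (i.e. ‖g x t − g y t‖_P ≤ ℓ·‖x − y‖_P for all x, y ∈ E, t ≥ 0), satisfies the one-sided Lipschitz condition with rate γ̄ (with respect to ‖·‖_P) on [0, ∞), and there exists c > 0 with c ≤ γ̄(t) < ℓ for all t ≥ 0. Let 0 < h < 2·c/ℓ², let x* ∈ E satisfy g x* t = 0 for all t ≥ 0, and let y : ℕ → E satisfy the explicit Euler recursion y (k+1) = y k + h • g (y k) (k·h) for all k. Then for every k ≥ 1, ‖y k − x*‖_P ≤ (∏_{m=0}^{k−1} (1 − 2·h·γ̄(m·h) + h²·ℓ²)^(1/2)) · ‖y 0 − x*‖_P; in particular, if γ̄ is the constant function γ, then ‖y k − x*‖_P ≤ (1 − 2·h·γ + h²·ℓ²)^(k/2) · ‖y 0 − x*‖_P. -/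
open Finset

/-! Squaring the error `e = y k - x*` of one Euler step `e ↦ e + h v` gives
`‖e + h v‖_P² = ‖e‖_P² + 2h⟪e, v⟫_P + h²‖v‖_P²`; since `g x* t = 0`, the one-sided Lipschitz
condition bounds the middle term by `-2hγ̄ ‖e‖_P²` and the Lipschitz condition the last by
`h²ℓ² ‖e‖_P²`. So each step contracts the error by `√(1 - 2hγ̄ + h²ℓ²)`, and the bound follows by
multiplying these factors. -/

section WeightedNorm

open Matrix

variable {n : ℕ} {P : Matrix (Fin n) (Fin n) ℝ}

lemma wip_eq_dotProduct (P : Matrix (Fin n) (Fin n) ℝ) (u v : EuclideanSpace ℝ (Fin n)) :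
    wip P u v = u.ofLp ⬝ᵥ P *ᵥ v.ofLp := rfl

lemma wip_self_nonneg (hP : P.PosSemidef) (u : EuclideanSpace ℝ (Fin n)) : 0 ≤ wip P u u :=
  hP.dotProduct_mulVec_nonneg u.ofLp

lemma wip_comm (hP : P.IsSymm) (u v : EuclideanSpace ℝ (Fin n)) : wip P u v = wip P v u := by
  rw [wip_eq_dotProduct, wip_eq_dotProduct, dotProduct_mulVec, ← mulVec_transpose, hP.eq,
    dotProduct_comm]

lemma wip_add_smul_self (hP : P.IsSymm) (u v : EuclideanSpace ℝ (Fin n)) (a : ℝ) :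
    wip P (u + a • v) (u + a • v) = wip P u u + 2 * a * wip P u v + a ^ 2 * wip P v v := by
  have hvu := wip_comm hP v u
  simp only [wip_eq_dotProduct, WithLp.ofLp_add, WithLp.ofLp_smul, mulVec_add, mulVec_smul,
    add_dotProduct, dotProduct_add, smul_dotProduct, dotProduct_smul, smul_eq_mul] at hvu ⊢
  rw [hvu]
  ring

lemma wnorm_nonneg (P : Matrix (Fin n) (Fin n) ℝ) (u : EuclideanSpace ℝ (Fin n)) :
    0 ≤ wnorm P u :=
  Real.sqrt_nonneg _

lemma sq_wnorm (hP : P.PosSemidef) (u : EuclideanSpace ℝ (Fin n)) :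
    wnorm P u ^ 2 = wip P u u :=
  Real.sq_sqrt (wip_self_nonneg hP u)

lemma wnorm_add_smul_le (hP : P.PosSemidef) {u v : EuclideanSpace ℝ (Fin n)} {a γ ℓ : ℝ}
    (ha : 0 ≤ a) (hinner : wip P u v ≤ -γ * wnorm P u ^ 2) (hnorm : wnorm P v ≤ ℓ * wnorm P u) :
    wnorm P (u + a • v) ≤ √(1 - 2 * a * γ + a ^ 2 * ℓ ^ 2) * wnorm P u := by
  have hsymm : P.IsSymm := isHermitian_iff_isSymm.mp hP.isHermitian
  have hnorm_sq : wnorm P v ^ 2 ≤ (ℓ * wnorm P u) ^ 2 :=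
    pow_le_pow_left₀ (wnorm_nonneg P v) hnorm 2
  have hsq : wip P (u + a • v) (u + a • v) ≤ (1 - 2 * a * γ + a ^ 2 * ℓ ^ 2) * wnorm P u ^ 2 := by
    rw [wip_add_smul_self hsymm, ← sq_wnorm hP u, ← sq_wnorm hP v]
    nlinarith [mul_le_mul_of_nonneg_left hinner ha, sq_nonneg a]
  calc wnorm P (u + a • v)
      ≤ √((1 - 2 * a * γ + a ^ 2 * ℓ ^ 2) * wnorm P u ^ 2) := Real.sqrt_le_sqrt hsq
    _ = √(1 - 2 * a * γ + a ^ 2 * ℓ ^ 2) * wnorm P u := by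
      rw [Real.sqrt_mul' _ (sq_nonneg _), Real.sqrt_sq (wnorm_nonneg P u)]

end WeightedNorm

lemma le_prod_range_mul_of_le_mul {a r : ℕ → ℝ} (hr : ∀ k, 0 ≤ r k)
    (hstep : ∀ k, a (k + 1) ≤ r k * a k) (k : ℕ) : a k ≤ (∏ m ∈ range k, r m) * a 0 := by
  induction k with
  | zero => simp
  | succ k ih =>
    calc a (k + 1) ≤ r k * a k := hstep k
      _ ≤ r k * ((∏ m ∈ range k, r m) * a 0) := mul_le_mul_of_nonneg_left ih (hr k)
      _ = (∏ m ∈ range (k + 1), r m) * a 0 := by rw [prod_range_succ]; ring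

theorem stmt_6_general {n : ℕ} (P : Matrix (Fin n) (Fin n) ℝ)
    (hPpos : P.PosDef)
    (g : EuclideanSpace ℝ (Fin n) → ℝ → EuclideanSpace ℝ (Fin n))
    (ℓ : ℝ)
    (hLip : ∀ x y : EuclideanSpace ℝ (Fin n), ∀ t : ℝ, 0 ≤ t →
      wnorm P (g x t - g y t) ≤ ℓ * wnorm P (x - y))
    (gam : ℝ → ℝ)
    (hOSL : ∀ x y : EuclideanSpace ℝ (Fin n), ∀ t : ℝ, 0 ≤ t →
      wip P (x - y) (g x t - g y t) ≤ -gam t * (wnorm P (x - y)) ^ 2)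
    (h : ℝ) (hh : 0 < h)
    (xs : EuclideanSpace ℝ (Fin n)) (hxs : ∀ t : ℝ, 0 ≤ t → g xs t = 0)
    (y : ℕ → EuclideanSpace ℝ (Fin n))
    (hy : ∀ k : ℕ, y (k + 1) = y k + h • g (y k) ((k : ℝ) * h)) :
    (∀ k : ℕ, 1 ≤ k →
      wnorm P (y k - xs) ≤
        (∏ m ∈ Finset.range k,
          Real.sqrt (1 - 2 * h * gam ((m : ℝ) * h) + h ^ 2 * ℓ ^ 2)) * wnorm P (y 0 - xs)) ∧
    (∀ γ : ℝ, (∀ t : ℝ, gam t = γ) → ∀ k : ℕ, 1 ≤ k →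
      wnorm P (y k - xs) ≤
        Real.sqrt (1 - 2 * h * γ + h ^ 2 * ℓ ^ 2) ^ k * wnorm P (y 0 - xs)) := by
  have hstep : ∀ k : ℕ, wnorm P (y (k + 1) - xs) ≤
      √(1 - 2 * h * gam ((k : ℝ) * h) + h ^ 2 * ℓ ^ 2) * wnorm P (y k - xs) := by
    intro k
    have ht : 0 ≤ (k : ℝ) * h := by positivity
    have herr : y (k + 1) - xs = (y k - xs) + h • (g (y k) (k * h) - g xs (k * h)) := by
      rw [hy k, hxs _ ht, sub_zero]
      abel
    rw [herr]
    exact wnorm_add_smul_le hPpos.posSemidef hh.le (hOSL _ _ _ ht) (hLip _ _ _ ht)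
  have hbound := le_prod_range_mul_of_le_mul (a := fun k ↦ wnorm P (y k - xs))
    (r := fun m ↦ √(1 - 2 * h * gam ((m : ℝ) * h) + h ^ 2 * ℓ ^ 2)) (fun _ ↦ Real.sqrt_nonneg _) hstep
  refine ⟨fun k _ ↦ hbound k, fun γ hγ k _ ↦ ?_⟩
  simpa only [hγ, prod_const, card_range] using hbound k

theorem stmt_6 {n : ℕ} (P : Matrix (Fin n) (Fin n) ℝ)
    (hPsymm : P.IsSymm) (hPpos : P.PosDef)
    (g : EuclideanSpace ℝ (Fin n) → ℝ → EuclideanSpace ℝ (Fin n))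
    (ℓ : ℝ)
    (hLip : ∀ x y : EuclideanSpace ℝ (Fin n), ∀ t : ℝ, 0 ≤ t →
      wnorm P (g x t - g y t) ≤ ℓ * wnorm P (x - y))
    (gam : ℝ → ℝ)
    (hOSL : ∀ x y : EuclideanSpace ℝ (Fin n), ∀ t : ℝ, 0 ≤ t →
      wip P (x - y) (g x t - g y t) ≤ -gam t * (wnorm P (x - y)) ^ 2)
    (c : ℝ) (hc : 0 < c) (hgam : ∀ t : ℝ, 0 ≤ t → c ≤ gam t ∧ gam t < ℓ)
    (h : ℝ) (hh : 0 < h) (hh2 : h < 2 * c / ℓ ^ 2)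
    (xs : EuclideanSpace ℝ (Fin n)) (hxs : ∀ t : ℝ, 0 ≤ t → g xs t = 0)
    (y : ℕ → EuclideanSpace ℝ (Fin n))
    (hy : ∀ k : ℕ, y (k + 1) = y k + h • g (y k) ((k : ℝ) * h)) :
    (∀ k : ℕ, 1 ≤ k →
      wnorm P (y k - xs) ≤
        (∏ m ∈ Finset.range k,
          Real.sqrt (1 - 2 * h * gam ((m : ℝ) * h) + h ^ 2 * ℓ ^ 2)) * wnorm P (y 0 - xs)) ∧
    (∀ γ : ℝ, (∀ t : ℝ, gam t = γ) → ∀ k : ℕ, 1 ≤ k →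
      wnorm P (y k - xs) ≤
        Real.sqrt (1 - 2 * h * γ + h ^ 2 * ℓ ^ 2) ^ k * wnorm P (y 0 - xs)) :=
  stmt_6_general P hPpos g ℓ hLip gam hOSL h hh xs hxs y hy
end
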